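/- Let φ(t) = c·exp(1/(|t|-1)) on [-1,1] with ∫ φ = 1. For every M > 1 and every N ∈ ℕ there exists l > 0 such that for every interval I ⊆ [-1,1) with ℓ(I) ≤ l and every integer N' with 1 ≤ N' ≤ N: if ∫_{I+ℓ(I)} φ / ∫_I φ > M, then ∫_{I+(N'+1)ℓ(I)} φ / ∫_{I+N'·ℓ(I)} φ > M^{1/8}/2. (Here I + s denotes the translate of I by s, and it is assumed all translates are contained in [-1,1).) -/

import Mathlib

/-!
On `[-1, 0]` the weight `φ(t) = c·exp(-1/(1+t))` is nondecreasing, so the mass of a window of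
length `L` lies between `L/2` and `L` times values of `φ` inside it, and the ratio of the masses
of two adjacent windows is, up to a factor 2, the exponential of a difference of values of
`1/(1+t)`. A ratio above `M` at `I = [a, a+L]` forces `(1+a)² ≲ L / log M`; hence, for
`L ≪ 1/(N² log M)`, all translates up to `I + N·L` stay within `O(N L)` of `-1`, where `1/(1+t)`
still drops by more than `log M / 8` across a window. If instead some translate reaches past `0`,
then `a > -1/2`, and there `φ(t + L) ≤ e^{4L} φ(t)`, which rules out a ratio above `M` once
`4L ≤ log M`. For `M < 256` monotonicity alone gives a ratio `≥ 1 > M^{1/8}/2`.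
-/

open MeasureTheory Real Set

/-- `φ(t) = c · exp(1/(|t|-1))` (with the convention `φ(±1) = 0`). -/
noncomputable def phi (c t : ℝ) : ℝ := if |t| = 1 then 0 else c * Real.exp (1 / (|t| - 1))

section WindowIntegrals

variable {f : ℝ → ℝ} {p q s L : ℝ}

theorem intervalIntegrable_of_monotoneOn (hf : MonotoneOn f (Icc p q)) (hpq : p ≤ q) :
    IntervalIntegrable f volume p q :=
  MonotoneOn.intervalIntegrable (by rwa [uIcc_of_le hpq])

theorem integral_le_sub_mul_of_monotoneOn (hf : MonotoneOn f (Icc p q)) (hpq : p ≤ q) :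
    ∫ t in p..q, f t ≤ (q - p) * f q := by
  calc ∫ t in p..q, f t ≤ ∫ _ in p..q, f q :=
        intervalIntegral.integral_mono_on hpq (intervalIntegrable_of_monotoneOn hf hpq)
          intervalIntegrable_const fun t ht ↦ hf ht (right_mem_Icc.2 hpq) ht.2
    _ = (q - p) * f q := by simp

theorem sub_mul_le_integral_of_monotoneOn (hf : MonotoneOn f (Icc p q)) (hf₀ : 0 ≤ f p)
    (hs : s ∈ Icc p q) : (q - s) * f s ≤ ∫ t in p..q, f t := by
  have hfl : MonotoneOn f (Icc p s) := hf.mono (Icc_subset_Icc_right hs.2)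
  have hfr : MonotoneOn f (Icc s q) := hf.mono (Icc_subset_Icc_left hs.1)
  have hleft : 0 ≤ ∫ t in p..s, f t :=
    intervalIntegral.integral_nonneg hs.1 fun t ht ↦
      hf₀.trans (hfl (left_mem_Icc.2 hs.1) ht ht.1)
  have hright : (q - s) * f s ≤ ∫ t in s..q, f t :=
    calc (q - s) * f s = ∫ _ in s..q, f s := by simp
      _ ≤ ∫ t in s..q, f t :=
        intervalIntegral.integral_mono_on hs.2 intervalIntegrable_const
          (intervalIntegrable_of_monotoneOn hfr hs.2)
          fun t ht ↦ hfr (left_mem_Icc.2 hs.2) ht ht.1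
  rw [← intervalIntegral.integral_add_adjacent_intervals
    (intervalIntegrable_of_monotoneOn hfl hs.1) (intervalIntegrable_of_monotoneOn hfr hs.2)]
  linarith

theorem integral_add_le_mul_integral {K : ℝ} (hpq : p ≤ q)
    (hf : IntervalIntegrable f volume p q) (hf' : IntervalIntegrable f volume (p + L) (q + L))
    (h : ∀ t ∈ Icc p q, f (t + L) ≤ K * f t) :
    ∫ t in (p + L)..(q + L), f t ≤ K * ∫ t in p..q, f t := by
  rw [← intervalIntegral.integral_comp_add_right, ← intervalIntegral.integral_const_mul]
  exact intervalIntegral.integral_mono_on hpq (by simpa using hf'.comp_add_right L)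
    (hf.const_mul K) h

/-- The ratio `φ(I + ℓ(I)) / φ(I)` for `I = [p, p + L]` and the weight `f`. -/
noncomputable def translateRatio (f : ℝ → ℝ) (p L : ℝ) : ℝ :=
  (∫ t in (p + L)..(p + 2 * L), f t) / ∫ t in p..(p + L), f t

theorem integral_pos_of_monotoneOn (hL : 0 < L) (hf : MonotoneOn f (Icc p (p + L)))
    (hf₀ : 0 ≤ f p) (hmid : 0 < f (p + L / 2)) : 0 < ∫ t in p..(p + L), f t := by
  have := sub_mul_le_integral_of_monotoneOn hf hf₀ (s := p + L / 2) ⟨by linarith, by linarith⟩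
  nlinarith

theorem translateRatio_le_of_monotoneOn (hL : 0 < L) (hf : MonotoneOn f (Icc p (p + 2 * L)))
    (hf₀ : 0 ≤ f p) (hmid : 0 < f (p + L / 2)) :
    translateRatio f p L ≤ 2 * (f (p + 2 * L) / f (p + L / 2)) := by
  have hnext : ∫ t in (p + L)..(p + 2 * L), f t ≤ L * f (p + 2 * L) := by
    have := integral_le_sub_mul_of_monotoneOn (hf.mono (Icc_subset_Icc_left (by linarith)))
      (by linarith : p + L ≤ p + 2 * L)
    rwa [show p + 2 * L - (p + L) = L by ring] at this
  have hcur : L / 2 * f (p + L / 2) ≤ ∫ t in p..(p + L), f t := by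
    have := sub_mul_le_integral_of_monotoneOn
      (hf.mono (Icc_subset_Icc_right (by linarith : p + L ≤ p + 2 * L)))
      hf₀ (s := p + L / 2) ⟨by linarith, by linarith⟩
    rwa [show p + L - (p + L / 2) = L / 2 by ring] at this
  have hf2L : 0 ≤ f (p + 2 * L) :=
    hf₀.trans (hf (left_mem_Icc.2 (by linarith)) (right_mem_Icc.2 (by linarith)) (by linarith))
  calc translateRatio f p L ≤ L * f (p + 2 * L) / (L / 2 * f (p + L / 2)) :=
        div_le_div₀ (by positivity) hnext (by positivity) hcur
    _ = 2 * (f (p + 2 * L) / f (p + L / 2)) := by field_simp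

theorem div_le_translateRatio_of_monotoneOn (hL : 0 < L) (hf : MonotoneOn f (Icc p (p + 2 * L)))
    (hf₀ : 0 ≤ f p) (hmid : 0 < f (p + L / 2)) :
    f (p + L + L / 2) / (2 * f (p + L)) ≤ translateRatio f p L := by
  have hfL : 0 < f (p + L) :=
    hmid.trans_le (hf ⟨by linarith, by linarith⟩ ⟨by linarith, by linarith⟩ (by linarith))
  have hnext : L / 2 * f (p + L + L / 2) ≤ ∫ t in (p + L)..(p + 2 * L), f t := by
    have := sub_mul_le_integral_of_monotoneOn (hf.mono (Icc_subset_Icc_left (by linarith)))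
      hfL.le (s := p + L + L / 2) ⟨by linarith, by linarith⟩
    rwa [show p + 2 * L - (p + L + L / 2) = L / 2 by ring] at this
  have hcur : ∫ t in p..(p + L), f t ≤ L * f (p + L) := by
    have := integral_le_sub_mul_of_monotoneOn
      (hf.mono (Icc_subset_Icc_right (by linarith : p + L ≤ p + 2 * L))) (by linarith)
    rwa [show p + L - p = L by ring] at this
  have hcur_pos := integral_pos_of_monotoneOn hL
    (hf.mono (Icc_subset_Icc_right (by linarith : p + L ≤ p + 2 * L))) hf₀ hmid
  have hf3L : 0 ≤ f (p + L + L / 2) :=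
    hfL.le.trans (hf ⟨by linarith, by linarith⟩ ⟨by linarith, by linarith⟩ (by linarith))
  calc f (p + L + L / 2) / (2 * f (p + L)) = L / 2 * f (p + L + L / 2) / (L * f (p + L)) := by
        field_simp
    _ ≤ translateRatio f p L :=
        div_le_div₀ ((by positivity : 0 ≤ L / 2 * f (p + L + L / 2)).trans hnext) hnext
          hcur_pos hcur

theorem one_le_translateRatio_of_monotoneOn (hL : 0 < L) (hf : MonotoneOn f (Icc p (p + 2 * L)))
    (hf₀ : 0 ≤ f p) (hmid : 0 < f (p + L / 2)) : 1 ≤ translateRatio f p L := by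
  have hfL : 0 ≤ f (p + L) :=
    hf₀.trans (hf ⟨le_rfl, by linarith⟩ ⟨by linarith, by linarith⟩ (by linarith))
  have hnext : L * f (p + L) ≤ ∫ t in (p + L)..(p + 2 * L), f t := by
    have := sub_mul_le_integral_of_monotoneOn (hf.mono (Icc_subset_Icc_left (by linarith)))
      hfL (s := p + L) ⟨le_rfl, by linarith⟩
    rwa [show p + 2 * L - (p + L) = L by ring] at this
  have hcur : ∫ t in p..(p + L), f t ≤ L * f (p + L) := by
    have := integral_le_sub_mul_of_monotoneOn
      (hf.mono (Icc_subset_Icc_right (by linarith : p + L ≤ p + 2 * L))) (by linarith)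
    rwa [show p + L - p = L by ring] at this
  have hcur_pos := integral_pos_of_monotoneOn hL
    (hf.mono (Icc_subset_Icc_right (by linarith : p + L ≤ p + 2 * L))) hf₀ hmid
  exact (one_le_div hcur_pos).2 (hcur.trans hnext)

end WindowIntegrals

theorem div_eight_lt_inv_sub_inv {m x L k u : ℝ} (hm : 0 < m) (hx : 0 ≤ x) (hL : 0 < L)
    (hu : 0 < u) (huk : u + L / 2 ≤ x + k * L) (hl : 4 * k ^ 2 * L * m ≤ 1)
    (hD : 7 / 8 * m < (x + L / 2)⁻¹ - (x + 2 * L)⁻¹) :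
    m / 8 < u⁻¹ - (u + L / 2)⁻¹ := by
  have hx2 : 7 / 8 * m * x ^ 2 < 3 / 2 * L := by
    rw [inv_sub_inv (by positivity) (by positivity), lt_div_iff₀ (by positivity)] at hD
    nlinarith [mul_le_mul_of_nonneg_left (by nlinarith : x ^ 2 ≤ (x + L / 2) * (x + 2 * L)) hm.le]
  have hw : (u + L / 2) ^ 2 ≤ 2 * x ^ 2 + 2 * (k * L) ^ 2 := by
    nlinarith [sq_nonneg (x - k * L)]
  have hkL : m * (k * L) ^ 2 ≤ L / 4 := by nlinarith [mul_le_mul_of_nonneg_left hl hL.le]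
  rw [inv_sub_inv hu.ne' (by positivity), lt_div_iff₀ (by positivity)]
  calc m / 8 * (u * (u + L / 2)) ≤ m / 8 * (2 * x ^ 2 + 2 * (k * L) ^ 2) := by
        gcongr
        nlinarith
    _ < L / 2 := by nlinarith
    _ = u + L / 2 - u := by ring

section Phi

variable {c s t : ℝ}

theorem phi_of_abs_lt (ht : |t| < 1) : phi c t = c * exp (-(1 - |t|)⁻¹) := by
  rw [phi, if_neg ht.ne, one_div, ← neg_sub, inv_neg]

theorem phi_nonneg (hc : 0 ≤ c) (t : ℝ) : 0 ≤ phi c t := by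
  unfold phi; split_ifs <;> positivity

theorem phi_pos (hc : 0 < c) (ht : |t| < 1) : 0 < phi c t := by
  rw [phi_of_abs_lt ht]; positivity

theorem phi_le_phi_of_abs_le (hc : 0 ≤ c) (hst : |s| ≤ |t|) (ht : |t| ≤ 1) :
    phi c t ≤ phi c s := by
  rcases ht.lt_or_eq with ht | ht
  · rw [phi_of_abs_lt ht, phi_of_abs_lt (hst.trans_lt ht)]
    gcongr
  · rw [phi, if_pos ht]
    exact phi_nonneg hc s

theorem monotoneOn_phi (hc : 0 ≤ c) : MonotoneOn (phi c) (Icc (-1) 0) :=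
  fun s hs t ht hst ↦ phi_le_phi_of_abs_le hc
    (by rw [abs_of_nonpos hs.2, abs_of_nonpos ht.2]; linarith)
    (by rw [abs_of_nonpos hs.2]; linarith [hs.1])

theorem antitoneOn_phi (hc : 0 ≤ c) : AntitoneOn (phi c) (Icc 0 1) :=
  fun s hs t ht hst ↦ phi_le_phi_of_abs_le hc
    (by rw [abs_of_nonneg hs.1, abs_of_nonneg ht.1]; linarith)
    (by rw [abs_of_nonneg ht.1]; exact ht.2)

theorem intervalIntegrable_phi (hc : 0 ≤ c) {p q : ℝ} (hp : p ∈ Icc (-1) 1)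
    (hq : q ∈ Icc (-1) 1) : IntervalIntegrable (phi c) volume p q := by
  have hneg : IntervalIntegrable (phi c) volume (-1) 0 :=
    MonotoneOn.intervalIntegrable (by rw [uIcc_of_le (by norm_num)]; exact monotoneOn_phi hc)
  have hpos : IntervalIntegrable (phi c) volume 0 1 :=
    AntitoneOn.intervalIntegrable (by rw [uIcc_of_le (by norm_num)]; exact antitoneOn_phi hc)
  have huIcc : uIcc (-1 : ℝ) 1 = Icc (-1) 1 := uIcc_of_le (by norm_num)
  exact (hneg.trans hpos).mono_set (uIcc_subset_uIcc (huIcc ▸ hp) (huIcc ▸ hq))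

theorem phi_div_phi (hc : c ≠ 0) {u v : ℝ} (hu : u ∈ Ioc (-1) 0) (hv : v ∈ Ioc (-1) 0) :
    phi c u / phi c v = exp ((1 + v)⁻¹ - (1 + u)⁻¹) := by
  have habs : ∀ {w : ℝ}, w ∈ Ioc (-1) 0 → |w| < 1 ∧ 1 - |w| = 1 + w := fun hw ↦ by
    rw [abs_of_nonpos hw.2]; exact ⟨by linarith [hw.1], by ring⟩
  rw [phi_of_abs_lt (habs hu).1, phi_of_abs_lt (habs hv).1, (habs hu).2, (habs hv).2,
    mul_div_mul_left _ _ hc, ← exp_sub]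
  ring_nf

theorem phi_add_le_exp_mul (hc : 0 ≤ c) {L : ℝ} (ht : -1 / 2 ≤ t) (hL : 0 ≤ L)
    (htL : t + L < 1) : phi c (t + L) ≤ exp (4 * L) * phi c t := by
  rcases le_or_gt |t| |t + L| with h | h
  · calc phi c (t + L) ≤ phi c t :=
          phi_le_phi_of_abs_le hc h (abs_le.2 ⟨by linarith, by linarith⟩)
      _ ≤ exp (4 * L) * phi c t :=
          le_mul_of_one_le_left (phi_nonneg hc t) (one_le_exp (by linarith))
  · have ht0 : t < 0 := by
      by_contra! ht0
      rw [abs_of_nonneg ht0, abs_of_nonneg (by linarith)] at h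
      linarith
    have ht' : |t| ≤ 1 / 2 := by rw [abs_of_neg ht0]; linarith
    have hdiff : |t| - |t + L| ≤ L := by
      simpa [abs_of_nonneg hL] using abs_sub_abs_le_abs_sub t (t + L)
    have hexp : (1 - |t|)⁻¹ - (1 - |t + L|)⁻¹ ≤ 4 * L := by
      have hprod : 1 / 4 ≤ (1 - |t|) * (1 - |t + L|) := by nlinarith
      rw [inv_sub_inv (by linarith) (by linarith), div_le_iff₀ (by linarith)]
      nlinarith [mul_le_mul_of_nonneg_left hprod hL]
    rw [phi_of_abs_lt (by linarith), phi_of_abs_lt (by linarith), mul_left_comm, ← exp_add]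
    gcongr
    linarith

end Phi

section PhiRatio

variable {c a L : ℝ}

theorem translateRatio_phi_le_exp (hc : 0 ≤ c) (ha : -1 / 2 ≤ a) (hL : 0 ≤ L)
    (h : a + 2 * L < 1) : translateRatio (phi c) a L ≤ exp (4 * L) := by
  have hIcc : ∀ {t}, a ≤ t → t ≤ a + 2 * L → t ∈ Icc (-1 : ℝ) 1 :=
    fun h₁ h₂ ↦ ⟨by linarith, by linarith⟩
  have hshift := integral_add_le_mul_integral (by linarith : a ≤ a + L)
    (intervalIntegrable_phi hc (hIcc le_rfl (by linarith)) (hIcc (by linarith) (by linarith)))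
    (intervalIntegrable_phi hc (hIcc (by linarith) (by linarith))
      (hIcc (by linarith) (by linarith)))
    fun t ht ↦ phi_add_le_exp_mul hc (by linarith [ht.1]) hL (by linarith [ht.2])
  rw [add_assoc, ← two_mul] at hshift
  exact div_le_of_le_mul₀ (intervalIntegral.integral_nonneg (by linarith) fun t _ ↦
    phi_nonneg hc t) (exp_pos _).le hshift

theorem translateRatio_phi_le_two_mul_exp (hc : 0 < c) (ha : -1 ≤ a) (hL : 0 < L)
    (h0 : a + 2 * L ≤ 0) :
    translateRatio (phi c) a L ≤ 2 * exp ((1 + a + L / 2)⁻¹ - (1 + a + 2 * L)⁻¹) := by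
  calc translateRatio (phi c) a L ≤ 2 * (phi c (a + 2 * L) / phi c (a + L / 2)) :=
        translateRatio_le_of_monotoneOn hL ((monotoneOn_phi hc.le).mono (Icc_subset_Icc ha h0))
          (phi_nonneg hc.le a) (phi_pos hc (abs_lt.2 ⟨by linarith, by linarith⟩))
    _ = 2 * exp ((1 + a + L / 2)⁻¹ - (1 + a + 2 * L)⁻¹) := by
        rw [phi_div_phi hc.ne' ⟨by linarith, h0⟩ ⟨by linarith, by linarith⟩, add_assoc,
          add_assoc]

theorem exp_div_two_le_translateRatio_phi (hc : 0 < c) (ha : -1 ≤ a) (hL : 0 < L)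
    (h0 : a + 2 * L ≤ 0) :
    exp ((1 + a + L)⁻¹ - (1 + a + L + L / 2)⁻¹) / 2 ≤ translateRatio (phi c) a L := by
  calc exp ((1 + a + L)⁻¹ - (1 + a + L + L / 2)⁻¹) / 2
      = phi c (a + L + L / 2) / (2 * phi c (a + L)) := by
        rw [mul_comm 2, ← div_div,
          phi_div_phi hc.ne' ⟨by linarith, by linarith⟩ ⟨by linarith, by linarith⟩]
        ring_nf
    _ ≤ translateRatio (phi c) a L :=
        div_le_translateRatio_of_monotoneOn hL
          ((monotoneOn_phi hc.le).mono (Icc_subset_Icc ha h0)) (phi_nonneg hc.le a)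
          (phi_pos hc (abs_lt.2 ⟨by linarith, by linarith⟩))

theorem one_le_translateRatio_phi (hc : 0 < c) (ha : -1 ≤ a) (hL : 0 < L)
    (h0 : a + 2 * L ≤ 0) : 1 ≤ translateRatio (phi c) a L :=
  one_le_translateRatio_of_monotoneOn hL ((monotoneOn_phi hc.le).mono (Icc_subset_Icc ha h0))
    (phi_nonneg hc.le a) (phi_pos hc (abs_lt.2 ⟨by linarith, by linarith⟩))

end PhiRatio

theorem rpow_div_two_lt_translateRatio_phi {c M a L r n : ℝ} (hc : 0 < c) (hM : 1 < M)
    (ha : -1 ≤ a) (hL : 0 < L) (hr : 0 ≤ r) (hrn : r ≤ n) (h0 : a + (n + 2) * L ≤ 0)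
    (hl : 4 * (n + 2) ^ 2 * L * log M ≤ 1) (hratio : M < translateRatio (phi c) a L) :
    M ^ (1 / 8 : ℝ) / 2 < translateRatio (phi c) (a + r * L) L := by
  have hrL : r * L ≤ n * L := mul_le_mul_of_nonneg_right hrn hL.le
  have hp : -1 ≤ a + r * L := by nlinarith
  have hp0 : a + r * L + 2 * L ≤ 0 := by linarith
  rcases lt_or_ge M 256 with hM256 | hM256
  · have hroot : M ^ (1 / 8 : ℝ) < 2 := by
      rw [one_div, rpow_inv_lt_iff_of_pos (by linarith) (by norm_num) (by norm_num)]
      norm_num [hM256]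
    linarith [one_le_translateRatio_phi hc hp hL hp0]
  set m := log M
  have hm : 0 < m := log_pos hM
  have hlog2 : log 2 ≤ m / 8 := by
    have : log ((2 : ℝ) ^ 8) ≤ m := log_le_log (by norm_num) (by norm_num; exact hM256)
    rw [log_pow, Nat.cast_ofNat] at this
    linarith
  have hD : 7 / 8 * m < (1 + a + L / 2)⁻¹ - (1 + a + 2 * L)⁻¹ := by
    have := log_lt_log (by linarith) (hratio.trans_le (translateRatio_phi_le_two_mul_exp hc ha hL
      (by nlinarith)))
    rw [log_mul two_ne_zero (exp_pos _).ne', log_exp] at this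
    linarith
  have hE := div_eight_lt_inv_sub_inv (u := 1 + (a + r * L) + L) (k := n + 2) hm (by linarith)
    hL (by linarith) (by linarith) hl hD
  calc M ^ (1 / 8 : ℝ) / 2 = exp (m / 8) / 2 := by rw [rpow_def_of_pos (by linarith), mul_one_div]
    _ < exp ((1 + (a + r * L) + L)⁻¹ - (1 + (a + r * L) + L + L / 2)⁻¹) / 2 := by gcongr
    _ ≤ translateRatio (phi c) (a + r * L) L := exp_div_two_le_translateRatio_phi hc hp hL hp0

theorem stmt5_general (c : ℝ) (hc : 0 < c) :
    ∀ M : ℝ, 1 < M → ∀ N : ℕ,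
      ∃ l : ℝ, 0 < l ∧
        ∀ a L : ℝ, 0 < L → L ≤ l →
          -- the interval `I = [a, a+L)` and all relevant translates lie in `[-1,1)`
          -1 ≤ a → a + (N + 2 : ℝ) * L ≤ 1 →
          ∀ N' : ℕ, 1 ≤ N' → N' ≤ N →
            (∫ t in (a + L)..(a + 2 * L), phi c t) / (∫ t in a..(a + L), phi c t) > M →
            (∫ t in (a + (N' + 1 : ℝ) * L)..(a + (N' + 2 : ℝ) * L), phi c t) /
              (∫ t in (a + (N' : ℝ) * L)..(a + (N' + 1 : ℝ) * L), phi c t)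
              > M ^ ((1 : ℝ) / 8) / 2 := by
  intro M hM N
  have hm : 0 < log M := log_pos hM
  refine ⟨min (log M / 4) (min (1 / (2 * (N + 2))) (1 / (4 * (N + 2) ^ 2 * log M))),
    by positivity, ?_⟩
  intro a L hL hLl ha haN N' hN'1 hN'N hratio
  obtain ⟨hl₁, hl₂, hl₃⟩ :
      4 * L ≤ log M ∧ 2 * (N + 2) * L ≤ 1 ∧ 4 * (N + 2) ^ 2 * L * log M ≤ 1 := by
    simp only [le_min_iff, le_div_iff₀ (by positivity : (0 : ℝ) < 2 * (N + 2)),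
      le_div_iff₀ (by positivity : 0 < 4 * ((N : ℝ) + 2) ^ 2 * log M)] at hLl
    exact ⟨by linarith, by linarith, by linarith⟩
  have hN : (1 : ℝ) ≤ N := by exact_mod_cast hN'1.trans hN'N
  rcases le_or_gt (a + (N + 2) * L) 0 with h0 | h0
  · rw [show a + ((N' : ℝ) + 1) * L = a + N' * L + L by ring,
      show a + ((N' : ℝ) + 2) * L = a + N' * L + 2 * L by ring]
    exact rpow_div_two_lt_translateRatio_phi hc hM ha hL (by positivity)
      (by exact_mod_cast hN'N) h0 hl₃ hratio
  · have hexp : exp (4 * L) ≤ M := by rw [← exp_log (by linarith : 0 < M)]; gcongr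
    have hR := translateRatio_phi_le_exp hc.le (a := a) (by nlinarith) hL.le (by nlinarith)
    exact absurd hratio (not_lt.2 (hR.trans hexp))

theorem stmt5 (c : ℝ) (hc : 0 < c)
    (hnorm : ∫ t in (-1:ℝ)..1, phi c t = 1) :
    ∀ M : ℝ, 1 < M → ∀ N : ℕ,
      ∃ l : ℝ, 0 < l ∧
        ∀ a L : ℝ, 0 < L → L ≤ l →
          -- the interval `I = [a, a+L)` and all relevant translates lie in `[-1,1)`
          -1 ≤ a → a + (N + 2 : ℝ) * L ≤ 1 →
          ∀ N' : ℕ, 1 ≤ N' → N' ≤ N →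
            (∫ t in (a + L)..(a + 2 * L), phi c t) / (∫ t in a..(a + L), phi c t) > M →
            (∫ t in (a + (N' + 1 : ℝ) * L)..(a + (N' + 2 : ℝ) * L), phi c t) /
              (∫ t in (a + (N' : ℝ) * L)..(a + (N' + 1 : ℝ) * L), phi c t)
              > M ^ ((1 : ℝ) / 8) / 2 :=
  stmt5_general c hc
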